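/- Every finitely accessible category is continuous: if A ≃ Ind(C) for a small category C, then the colimit functor colim : Ind(A) → A has a left adjoint. -/

import Mathlib

/-!
Let `L ⊣ Ind.yoneda`. For a finitely presentable `b : A`, the map
`Hom(Ind.yoneda b, Y) → Hom(b, L Y)`, `f ↦ ε_b⁻¹ ≫ L f`, is natural in `Y : Ind A`, bijective
when `Y` is representable (the counit is invertible), and both sides preserve filtered colimits
in `Y` (`Ind.yoneda b` is finitely presentable, `L` is a left adjoint). Every ind-object is a
filtered colimit of representables, so the map is always bijective: the left adjoint of `L` is
defined at `b`, with value `Ind.yoneda b`. The objects where a partial left adjoint is defined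
are closed under filtered colimits, and when `A ≌ Ind C` every object of `A` is a filtered
colimit of finitely presentable objects.
-/

open CategoryTheory Limits Opposite Functor

universe v u u'

namespace CategoryTheory

lemma ObjectProperty.isFinitelyPresentable_colimitsOfShape_of_equivalence
    {A : Type u} [Category.{v} A] {B : Type u'} [Category.{v} B] (e : A ≌ B)
    {J : Type v} [SmallCategory J] {X : A}
    (h : (isFinitelyPresentable.{v} A).colimitsOfShape J X) :
    (isFinitelyPresentable.{v} B).colimitsOfShape J (e.functor.obj X) :=
  have := Cardinal.fact_isRegular_aleph0
  let ⟨P⟩ := h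
  ⟨{ toColimitPresentation := P.map e.functor
     prop_diag_obj := fun j =>
       have : IsFinitelyPresentable.{v} (P.diag.obj j) := P.prop_diag_obj j
       isCardinalPresentable_of_equivalence _ _ e }⟩

namespace Ind

section

variable {C : Type u} [Category.{v} C]

noncomputable def coyonedaObjYonedaObjIso (X : C) :
    coyoneda.obj (op (Ind.yoneda.obj X)) ≅
      Ind.inclusion C ⋙ (evaluation Cᵒᵖ (Type v)).obj (op X) :=
  NatIso.ofComponents
    (fun M => Equiv.toIso <|
      (Ind.inclusion.fullyFaithful (C := C)).homEquiv.trans <|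
        (Iso.homCongr (Ind.yonedaCompInclusion.app X) (Iso.refl _)).trans yonedaEquiv)
    (fun {M N} g => by
      ext f
      simp [FullyFaithful.homEquiv, yonedaEquiv_comp])

instance isFinitelyPresentable_yoneda_obj (X : C) :
    IsFinitelyPresentable.{v} (Ind.yoneda.obj X) := by
  rw [isFinitelyPresentable_iff_preservesFilteredColimits]
  exact ⟨fun _ _ _ => preservesColimitsOfShape_of_natIso (coyonedaObjYonedaObjIso X).symm⟩

lemma isFinitelyPresentable_colimitsOfShape_presentation (Y : Ind C) :
    (ObjectProperty.isFinitelyPresentable.{v} (Ind C)).colimitsOfShape Y.presentation.I Y :=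
  ⟨(ObjectProperty.ColimitOfShape.colimit (Y.presentation.F ⋙ Ind.yoneda)
    fun j => isFinitelyPresentable_yoneda_obj (Y.presentation.F.obj j)).ofIso
      (Ind.colimitPresentationCompYoneda Y)⟩

lemma isIso_of_isIso_app_yoneda {D : Type*} [Category* D] {F G : Ind C ⥤ D}
    [PreservesFilteredColimitsOfSize.{v, v} F] [PreservesFilteredColimitsOfSize.{v, v} G]
    (τ : F ⟶ G) [∀ X, IsIso (τ.app (Ind.yoneda.obj X))] : IsIso τ := by
  refine @NatIso.isIso_of_isIso_app _ _ _ _ _ _ τ fun Y => ?_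
  let K := Y.presentation.F ⋙ Ind.yoneda
  have : IsIso (whiskerLeft K τ) := @NatIso.isIso_of_isIso_app _ _ _ _ _ _ _ fun j =>
    inferInstanceAs (IsIso (τ.app (Ind.yoneda.obj (Y.presentation.F.obj j))))
  have := isIso_app_coconePt_of_preservesColimit K τ _ (colimit.isColimit K)
  exact (NatTrans.isIso_app_iff_of_iso τ (Ind.colimitPresentationCompYoneda Y)).mp this

end

section

variable {A : Type u} [Category.{v} A] {L : Ind A ⥤ A}

noncomputable def coyonedaComparison (adj : L ⊣ Ind.yoneda) (b : A) :
    coyoneda.obj (op (Ind.yoneda.obj b)) ⟶ L ⋙ coyoneda.obj (op b) :=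
  coyonedaEquiv.symm (inv (adj.counit.app b))

lemma coyonedaComparison_app_apply (adj : L ⊣ Ind.yoneda) (b : A) {Y : Ind A}
    (f : Ind.yoneda.obj b ⟶ Y) :
    (coyonedaComparison adj b).app Y f = inv (adj.counit.app b) ≫ L.map f := by
  simp [coyonedaComparison, coyonedaEquiv]

instance isIso_coyonedaComparison_app_yoneda (adj : L ⊣ Ind.yoneda) (b a : A) :
    IsIso ((coyonedaComparison adj b).app (Ind.yoneda.obj a)) := by
  have hcomp : (coyonedaComparison adj b).app (Ind.yoneda.obj a) ∘ Ind.yoneda.map =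
      fun g => g ≫ inv (adj.counit.app a) := by
    ext g
    rw [Function.comp_apply, coyonedaComparison_app_apply, IsIso.inv_comp_eq, ← Category.assoc,
      IsIso.eq_comp_inv]
    exact adj.counit.naturality g
  rw [isIso_iff_bijective, ← Function.Bijective.of_comp_iff _
    (Ind.yoneda.fullyFaithful.map_bijective b a), hcomp]
  exact (asIso (adj.counit.app a)).symm.homToEquiv.bijective

lemma leftAdjointObjIsDefined_of_isFinitelyPresentable (adj : L ⊣ Ind.yoneda) (b : A)
    [IsFinitelyPresentable.{v} b] :
    L.leftAdjointObjIsDefined b := by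
  have : PreservesColimits L := adj.leftAdjoint_preservesColimits
  have := isIso_of_isIso_app_yoneda (coyonedaComparison adj b)
  exact corepresentable_of_natIso _ (asIso (coyonedaComparison adj b))

theorem isRightAdjoint_of_isFinitelyPresentable_colimitsOfShape (adj : L ⊣ Ind.yoneda)
    (hA : ∀ X : A, ∃ (J : Type v) (_ : SmallCategory J) (_ : IsFiltered J),
      (ObjectProperty.isFinitelyPresentable.{v} A).colimitsOfShape J X) :
    L.IsRightAdjoint := by
  refine isRightAdjoint_of_leftAdjointObjIsDefined_eq_top (funext fun X => eq_true ?_)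
  obtain ⟨J, _, _, ⟨P⟩⟩ := hA X
  exact leftAdjointObjIsDefined_of_isColimit P.isColimit fun j =>
    have : IsFinitelyPresentable.{v} (P.diag.obj j) := P.prop_diag_obj j
    leftAdjointObjIsDefined_of_isFinitelyPresentable adj _

end

lemma exists_isFinitelyPresentable_colimitsOfShape_of_equivalence {C : Type u'}
    [Category.{v} C] {A : Type u} [Category.{v} A] (e : A ≌ Ind C) (X : A) :
    ∃ (J : Type v) (_ : SmallCategory J) (_ : IsFiltered J),
      (ObjectProperty.isFinitelyPresentable.{v} A).colimitsOfShape J X :=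
  let Y := e.functor.obj X
  ⟨Y.presentation.I, inferInstance, inferInstance,
    ObjectProperty.prop_of_iso _ (e.unitIso.app X).symm
      (ObjectProperty.isFinitelyPresentable_colimitsOfShape_of_equivalence e.symm
        (isFinitelyPresentable_colimitsOfShape_presentation Y))⟩

end Ind

end CategoryTheory

theorem stmt17 {C : Type v} [SmallCategory C] {A : Type u} [Category.{v} A]
    (e : A ≌ Ind C)
    (colimA : Ind A ⥤ A) (adj : colimA ⊣ Ind.yoneda) :
    ∃ L : A ⥤ Ind A, Nonempty (L ⊣ colimA) := by
  have := Ind.isRightAdjoint_of_isFinitelyPresentable_colimitsOfShape adj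
    (Ind.exists_isFinitelyPresentable_colimitsOfShape_of_equivalence e)
  exact ⟨_, ⟨Adjunction.ofIsRightAdjoint colimA⟩⟩
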